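/- Let f : [a,b] → ℝ be continuous with 0 ≤ a < b < ∞, and let p, q > 0. If |f| is P-convex on [a,b], then ∫_a^b (x-a)^p (b-x)^q f(x) dx ≤ (b-a)^(p+q+1) · B(p+1, q+1) · (|f(a)| + |f(b)|). -/

import Mathlib

/-!
Writing `x = t b + (1 - t) a`, P-convexity of `|f|` bounds `f` on `[a, b]` by `|f a| + |f b|`.
The weight `(x - a)^p (b - x)^q` is nonnegative, so the integral is at most that constant times
the integral of the weight, which the substitution `x = a + (b - a) t` turns into
`(b - a)^(p+q+1) B(p+1, q+1)`.
-/

noncomputable def eulerBeta (x y : ℝ) : ℝ :=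
  ∫ t in (0:ℝ)..1, t ^ (x - 1) * (1 - t) ^ (y - 1)

open Set

def PConvexOn (s : Set ℝ) (g : ℝ → ℝ) : Prop :=
  ∀ x ∈ s, ∀ y ∈ s, ∀ t ∈ Icc (0:ℝ) 1, g (t * x + (1 - t) * y) ≤ g x + g y

theorem PConvexOn.le_add_of_mem_Icc {a b x : ℝ} {g : ℝ → ℝ} (hg : PConvexOn (Icc a b) g)
    (hab : a ≤ b) (hx : x ∈ Icc a b) : g x ≤ g a + g b := by
  obtain ⟨s, t, hs, ht, hst, rfl⟩ := Icc_subset_segment hx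
  have hs1 : s ≤ 1 := by linarith
  simpa [smul_eq_mul, ← hst] using
    hg a (left_mem_Icc.2 hab) b (right_mem_Icc.2 hab) s ⟨hs, hs1⟩

theorem integral_sub_rpow_mul_sub_rpow {a b : ℝ} (hab : a < b) (p q : ℝ) :
    ∫ x in a..b, (x - a) ^ p * (b - x) ^ q =
      (b - a) ^ (p + q + 1) * eulerBeta (p + 1) (q + 1) := by
  have hba : 0 < b - a := sub_pos.2 hab
  have hsubst := intervalIntegral.integral_comp_mul_add (a := 0) (b := 1)
    (fun x => (x - a) ^ p * (b - x) ^ q) hba.ne' a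
  simp only [mul_zero, zero_add, mul_one, sub_add_cancel, smul_eq_mul] at hsubst
  have hscale : ∀ t ∈ uIcc (0:ℝ) 1, ((b - a) * t + a - a) ^ p * (b - ((b - a) * t + a)) ^ q
      = (b - a) ^ p * (b - a) ^ q * (t ^ p * (1 - t) ^ q) := by
    intro t ht
    rw [uIcc_of_le zero_le_one] at ht
    rw [show (b - a) * t + a - a = (b - a) * t by ring,
      show b - ((b - a) * t + a) = (b - a) * (1 - t) by ring,
      Real.mul_rpow hba.le ht.1, Real.mul_rpow hba.le (sub_nonneg.2 ht.2)]
    ring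
  rw [intervalIntegral.integral_congr hscale, intervalIntegral.integral_const_mul] at hsubst
  rw [eq_inv_mul_iff_mul_eq₀ hba.ne'] at hsubst
  rw [← hsubst, eulerBeta, Real.rpow_add hba, Real.rpow_add hba, Real.rpow_one]
  simp only [add_sub_cancel_right]
  ring

theorem stmt4_general (a b p q : ℝ) (f : ℝ → ℝ) (hab : a < b)
    (hf : ContinuousOn f (Set.Icc a b)) (hp : 0 < p) (hq : 0 < q)
    (hpc : ∀ x ∈ Set.Icc a b, ∀ y ∈ Set.Icc a b, ∀ t ∈ Set.Icc (0:ℝ) 1,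
      |f (t * x + (1 - t) * y)| ≤ |f x| + |f y|) :
    ∫ x in a..b, (x - a) ^ p * (b - x) ^ q * f x ≤
      (b - a) ^ (p + q + 1) * eulerBeta (p + 1) (q + 1) * (|f a| + |f b|) := by
  set w : ℝ → ℝ := fun x => (x - a) ^ p * (b - x) ^ q
  have hw : ContinuousOn w (Icc a b) :=
    ((continuousOn_id.sub continuousOn_const).rpow_const fun _ _ => Or.inr hp.le).mul
      ((continuousOn_const.sub continuousOn_id).rpow_const fun _ _ => Or.inr hq.le)
  have hw_nonneg : ∀ x ∈ Icc a b, 0 ≤ w x := fun x hx =>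
    mul_nonneg (Real.rpow_nonneg (sub_nonneg.2 hx.1) p) (Real.rpow_nonneg (sub_nonneg.2 hx.2) q)
  have hf_le : ∀ x ∈ Icc a b, f x ≤ |f a| + |f b| := fun x hx =>
    (le_abs_self _).trans (PConvexOn.le_add_of_mem_Icc (g := fun x => |f x|) hpc hab.le hx)
  have hint : ∀ g : ℝ → ℝ, ContinuousOn g (Icc a b) →
      IntervalIntegrable g MeasureTheory.volume a b :=
    fun g hg => hg.intervalIntegrable_of_Icc hab.le
  calc ∫ x in a..b, w x * f x
      ≤ ∫ x in a..b, w x * (|f a| + |f b|) :=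
        intervalIntegral.integral_mono_on hab.le (hint _ (hw.mul hf))
          (hint _ (hw.mul continuousOn_const))
          fun x hx => mul_le_mul_of_nonneg_left (hf_le x hx) (hw_nonneg x hx)
    _ = _ := by rw [intervalIntegral.integral_mul_const, integral_sub_rpow_mul_sub_rpow hab]

theorem stmt4 (a b p q : ℝ) (f : ℝ → ℝ) (ha : 0 ≤ a) (hab : a < b)
    (hf : ContinuousOn f (Set.Icc a b)) (hp : 0 < p) (hq : 0 < q)
    (hpc : ∀ x ∈ Set.Icc a b, ∀ y ∈ Set.Icc a b, ∀ t ∈ Set.Icc (0:ℝ) 1,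
      |f (t * x + (1 - t) * y)| ≤ |f x| + |f y|) :
    ∫ x in a..b, (x - a) ^ p * (b - x) ^ q * f x ≤
      (b - a) ^ (p + q + 1) * eulerBeta (p + 1) (q + 1) * (|f a| + |f b|) :=
  stmt4_general a b p q f hab hf hp hq hpc
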